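/- Let k ≥ 3 and let a_{ij} (i+j = k, i,j ≥ 0) be real numbers. Consider the polynomial P(x,y) = y^2 + Σ_{i+j=k} (a_{ij}/(i!j!)) x^i y^j in ℝ[x,y], and set h(x,y) = (1/2) Σ_{i+j=k, j≥1} (a_{ij}/(i!j!)) x^i y^{j-1}. Then every monomial occurring in the polynomial P(x, y − h(x,y)) − (y^2 + (a_{k0}/k!) x^k) has total degree at least k+1; that is, the k-jet at the origin of P after the coordinate change (x,y) ↦ (x, y − h(x,y)) equals y^2 + (a_{k0}/k!) x^k. -/
import Mathlib


open MvPolynomial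

/-- The polynomial `P(x,y) = y² + Σ_{i+j=k} (a_{ij}/(i!j!)) xⁱ yʲ`. -/
noncomputable def Pdef0 (k : ℕ) (a : ℕ → ℕ → ℝ) : MvPolynomial (Fin 2) ℝ :=
  X 1 ^ 2 + ∑ i ∈ Finset.range (k + 1),
    C (a i (k - i) / ((Nat.factorial i : ℝ) * (Nat.factorial (k - i) : ℝ))) *
      X 0 ^ i * X 1 ^ (k - i)

/-- The polynomial `h(x,y) = (1/2) Σ_{i+j=k, j≥1} (a_{ij}/(i!j!)) xⁱ y^{j-1}`. -/
noncomputable def hdef0 (k : ℕ) (a : ℕ → ℕ → ℝ) : MvPolynomial (Fin 2) ℝ :=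
  C (1 / 2 : ℝ) * ∑ i ∈ Finset.range k,
    C (a i (k - i) / ((Nat.factorial i : ℝ) * (Nat.factorial (k - i) : ℝ))) *
      X 0 ^ i * X 1 ^ (k - i - 1)


noncomputable def Idl : Ideal (MvPolynomial (Fin 2) ℝ) := Ideal.span {X 0, X 1}

lemma deg_mul {p q : MvPolynomial (Fin 2) ℝ} {n1 n2 : ℕ}
    (h1 : ∀ m ∈ p.support, n1 ≤ m.sum fun _ e => e)
    (h2 : ∀ m ∈ q.support, n2 ≤ m.sum fun _ e => e) :
    ∀ m ∈ (p * q).support, n1 + n2 ≤ m.sum fun _ e => e := by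
  intro m hm
  obtain ⟨m1, hm1, m2, hm2, rfl⟩ := Finset.mem_add.mp (MvPolynomial.support_mul p q hm)
  rw [Finsupp.sum_add_index' (fun _ => rfl) (fun _ _ _ => rfl)]
  exact add_le_add (h1 _ hm1) (h2 _ hm2)

lemma deg_of_mem_Idl {p : MvPolynomial (Fin 2) ℝ} (hp : p ∈ Idl) :
    ∀ m ∈ p.support, 1 ≤ m.sum fun _ e => e := by
  induction hp using Submodule.span_induction with
  | mem x hx =>
    intro m hm
    rcases hx with rfl | rfl <;>
    · rw [support_X] at hm
      simp only [Finset.mem_singleton] at hm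
      subst hm
      simp
  | zero => simp
  | add x y _ _ ihx ihy =>
    intro m hm
    rcases Finset.mem_union.mp (MvPolynomial.support_add hm) with h | h
    · exact ihx m h
    · exact ihy m h
  | smul r x _ ih =>
    rw [smul_eq_mul]
    simpa using deg_mul (p := r) (n1 := 0) (fun m _ => Nat.zero_le _) ih

lemma deg_of_mem_Idl_pow (n : ℕ) {p : MvPolynomial (Fin 2) ℝ} (hp : p ∈ Idl ^ n) :
    ∀ m ∈ p.support, n ≤ m.sum fun _ e => e := by
  induction n generalizing p with
  | zero => intro m _; exact Nat.zero_le _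
  | succ n ih =>
    rw [pow_succ] at hp
    refine Submodule.mul_induction_on hp (fun a ha b hb => ?_) (fun x y hx hy m hm => ?_)
    · exact deg_mul (ih ha) (deg_of_mem_Idl hb)
    · rcases Finset.mem_union.mp (MvPolynomial.support_add hm) with h | h
      · exact hx m h
      · exact hy m h

/-- Part (1) of the coordinate-change lemma (Proposition 3.1):
every monomial of `P(x, y - h(x,y)) - (y² + (a_{k0}/k!) xᵏ)` has total degree at least
`k + 1`; that is, the `k`-jet at the origin of `P` after the coordinate change
`(x,y) ↦ (x, y - h(x,y))` equals `y² + (a_{k0}/k!) xᵏ`. -/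
theorem stmt0 (k : ℕ) (hk : 3 ≤ k) (a : ℕ → ℕ → ℝ) :
    ∀ m ∈ (bind₁ (fun j : Fin 2 => if j = 0 then (X 0 : MvPolynomial (Fin 2) ℝ)
          else X 1 - hdef0 k a) (Pdef0 k a)
        - (X 1 ^ 2 + C (a k 0 / (Nat.factorial k : ℝ)) * X 0 ^ k)).support,
      k + 1 ≤ m.sum fun _ e => e := by
  set h := hdef0 k a with hhdef
  have hX0 : (X 0 : MvPolynomial (Fin 2) ℝ) ∈ Idl := Ideal.subset_span (by simp)
  have hX1 : (X 1 : MvPolynomial (Fin 2) ℝ) ∈ Idl := Ideal.subset_span (by simp)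
  have hXpow : ∀ i j : ℕ, (X 0 : MvPolynomial (Fin 2) ℝ) ^ i * X 1 ^ j ∈ Idl ^ (i + j) := by
    intro i j
    rw [pow_add]
    exact Ideal.mul_mem_mul (Ideal.pow_mem_pow hX0 i) (Ideal.pow_mem_pow hX1 j)
  have hhmem : h ∈ Idl ^ (k - 1) := by
    rw [hhdef, hdef0]
    refine Ideal.mul_mem_left _ _ (Ideal.sum_mem _ fun i hi => ?_)
    have hik : i < k := Finset.mem_range.mp hi
    rw [mul_assoc]
    refine Ideal.mul_mem_left _ _ ?_
    have := hXpow i (k - i - 1)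
    rwa [show i + (k - i - 1) = k - 1 by omega] at this
  have hhI : h ∈ Idl := by
    have := Ideal.pow_le_pow_right (show 1 ≤ k - 1 by omega) hhmem
    rwa [pow_one] at this
  have hyh : X 1 - h ∈ Idl := sub_mem hX1 hhI
  -- the key algebraic identity
  have h2eq : 2 * X 1 * h = ∑ i ∈ Finset.range k,
      C (a i (k - i) / ((Nat.factorial i : ℝ) * (Nat.factorial (k - i) : ℝ))) *
        X 0 ^ i * X 1 ^ (k - i) := by
    rw [hhdef, hdef0, Finset.mul_sum, Finset.mul_sum]
    refine Finset.sum_congr rfl fun i hi => ?_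
    have hik : i < k := Finset.mem_range.mp hi
    have hC : (2 : MvPolynomial (Fin 2) ℝ) * C (1/2 : ℝ) = 1 := by
      rw [show (2 : MvPolynomial (Fin 2) ℝ) = C 2 from (map_ofNat C 2).symm, ← C_mul]
      norm_num
    rw [show k - i = (k - i - 1) + 1 by omega, pow_succ]
    simp only [Nat.add_sub_cancel]
    linear_combination (X 1 ^ (k - i - 1) *
      (C (a i (k - i - 1 + 1) / ((Nat.factorial i : ℝ) * (Nat.factorial (k - i - 1 + 1) : ℝ))) *
        X 0 ^ i) * X 1) * hC
  have expand : bind₁ (fun j : Fin 2 => if j = 0 then (X 0 : MvPolynomial (Fin 2) ℝ)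
          else X 1 - h) (Pdef0 k a)
        - (X 1 ^ 2 + C (a k 0 / (Nat.factorial k : ℝ)) * X 0 ^ k)
      = h ^ 2 + ∑ i ∈ Finset.range k,
          C (a i (k - i) / ((Nat.factorial i : ℝ) * (Nat.factorial (k - i) : ℝ))) *
            X 0 ^ i * ((X 1 - h) ^ (k - i) - X 1 ^ (k - i)) := by
    have hb : bind₁ (fun j : Fin 2 => if j = 0 then (X 0 : MvPolynomial (Fin 2) ℝ)
          else X 1 - h) (Pdef0 k a)
        = (X 1 - h) ^ 2 + ∑ i ∈ Finset.range (k + 1),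
            C (a i (k - i) / ((Nat.factorial i : ℝ) * (Nat.factorial (k - i) : ℝ))) *
              X 0 ^ i * (X 1 - h) ^ (k - i) := by
      simp [Pdef0, map_add, map_sum, map_mul, map_pow, bind₁_X_right, algHom_C]
    rw [hb, Finset.sum_range_succ, Nat.sub_self]
    simp only [pow_zero, mul_one, Nat.factorial_zero, Nat.cast_one]
    have hsum : (∑ i ∈ Finset.range k,
        C (a i (k - i) / ((Nat.factorial i : ℝ) * (Nat.factorial (k - i) : ℝ))) *
          X 0 ^ i * (X 1 - h) ^ (k - i))
        = (∑ i ∈ Finset.range k,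
            C (a i (k - i) / ((Nat.factorial i : ℝ) * (Nat.factorial (k - i) : ℝ))) *
              X 0 ^ i * ((X 1 - h) ^ (k - i) - X 1 ^ (k - i))) + 2 * X 1 * h := by
      rw [h2eq, ← Finset.sum_add_distrib]
      exact Finset.sum_congr rfl fun i _ => by ring
    rw [hsum]
    ring
  have key : bind₁ (fun j : Fin 2 => if j = 0 then (X 0 : MvPolynomial (Fin 2) ℝ)
          else X 1 - h) (Pdef0 k a)
        - (X 1 ^ 2 + C (a k 0 / (Nat.factorial k : ℝ)) * X 0 ^ k) ∈ Idl ^ (k + 1) := by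
    rw [expand]
    refine Submodule.add_mem _ ?_ (Ideal.sum_mem _ fun i hi => ?_)
    · have h2 : h ^ 2 ∈ Idl ^ ((k - 1) * 2) := by
        rw [pow_mul]; exact Ideal.pow_mem_pow hhmem 2
      exact Ideal.pow_le_pow_right (by omega) h2
    · have hik : i < k := Finset.mem_range.mp hi
      set n := k - i with hn
      have hgeo : (X 1 - h) ^ n - X 1 ^ n
          = -((∑ j ∈ Finset.range n, X 1 ^ j * (X 1 - h) ^ (n - 1 - j)) * h) := by
        have hg := geom_sum₂_mul (X 1 : MvPolynomial (Fin 2) ℝ) (X 1 - h) n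
        have hsub : (X 1 : MvPolynomial (Fin 2) ℝ) - (X 1 - h) = h := by ring
        rw [hsub] at hg
        linear_combination hg
      have hG : (∑ j ∈ Finset.range n, (X 1 : MvPolynomial (Fin 2) ℝ) ^ j * (X 1 - h) ^ (n - 1 - j))
          ∈ Idl ^ (n - 1) := by
        refine Ideal.sum_mem _ fun j hj => ?_
        have hjn : j < n := Finset.mem_range.mp hj
        have := Ideal.mul_mem_mul (Ideal.pow_mem_pow hX1 j) (Ideal.pow_mem_pow hyh (n - 1 - j))
        rw [← pow_add] at this
        rwa [show j + (n - 1 - j) = n - 1 by omega] at this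
      have hterm : (X 0 : MvPolynomial (Fin 2) ℝ) ^ i *
          ((∑ j ∈ Finset.range n, X 1 ^ j * (X 1 - h) ^ (n - 1 - j)) * h)
          ∈ Idl ^ (i + ((n - 1) + (k - 1))) := by
        rw [pow_add]
        refine Ideal.mul_mem_mul (Ideal.pow_mem_pow hX0 i) ?_
        rw [pow_add]
        exact Ideal.mul_mem_mul hG hhmem
      rw [hgeo]
      have heq : C (a i (k - i) / ((Nat.factorial i : ℝ) * (Nat.factorial (k - i) : ℝ))) *
          X 0 ^ i * -((∑ j ∈ Finset.range n, X 1 ^ j * (X 1 - h) ^ (n - 1 - j)) * h)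
          = C (a i (k - i) / ((Nat.factorial i : ℝ) * (Nat.factorial (k - i) : ℝ))) *
            -(X 0 ^ i * ((∑ j ∈ Finset.range n, X 1 ^ j * (X 1 - h) ^ (n - 1 - j)) * h)) := by
        ring
      rw [heq]
      refine Ideal.mul_mem_left _ _ (neg_mem ?_)
      exact Ideal.pow_le_pow_right (by omega) hterm
  exact fun m hm => deg_of_mem_Idl_pow (k + 1) key m hm
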